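/- arXiv:1312.3164 — 4 statements merged into one kernel-verified Lean document; each statement's English description precedes it below -/
import Mathlib

section
/- For all integers m, n, u, k with u ≥ 0, k ≥ 2, n ≥ 2 and m ≥ max{u+1, (k-1)(n-1)}, the determinant D(m,n,u,k) equals the sum over i from 0 to ⌊u/k⌋ of (-1)^i · (m-(k-1)(n-1))/(m+n-1-k·i) · C(m+n-1-k·i, n-1-i) · C(u-(k-1)·i, i), where the equality is of rational numbers. -/
/-!
The matrix of `D` is lower Hessenberg with unit subdiagonal, so its leading principal minors obey
`P (s + 1) = ∑_{j + r = s} (-1)^j C(m - c_{s+1}, j + 1) P r`, where `c_s = max u ((k - 1) s)`.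
Each summand of the claimed formula is `(-1)^i C(u - (k-1)i, i)` times the ballot-type number
`C(a, b) - k C(a - 1, b - 1) = (a - k b) / a * C(a, b)`. An alternating Vandermonde convolution
shows that these sums satisfy the same recurrence as soon as
`∑_i (-1)^i C(u - (k-1)i, i) (C(c + s - k i, s - i) - k C(c + s - k i - 1, s - i - 1)) = 0`
for `c = c_s`. If `c = (k - 1) s`, every term vanishes: the brackets with `i < s` because
`C(k t, t) = k C(k t - 1, t - 1)`, and the last one because `C(u - (k-1)s, s) = 0`. If `c = u`, the sum is `F u s - k F u (s - 1)` for
`F u N = ∑_i (-1)^i C(u - (k-1)i, i) C(u + N - k i, N - i)`, and `F u N = k^N` whenever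
`(k - 1) N ≤ u`, by induction on `N` and then on `u`, using Pascal's rule in both factors.
-/

/-- Binomial coefficient `C(a,b)` for integers, with the convention that it is `0` when `b < 0`. -/
def ichoose (a b : ℤ) : ℤ := if 0 ≤ b then (a.toNat.choose b.toNat : ℤ) else 0

/-- The determinant `D(m,n,u,k)` of the `(n-1)×(n-1)` matrix with `(i,j)` entry
`C(m - max{u, (k-1)j}, 1 - i + j)` for `i, j = 1, …, n-1`. -/
def D (m n u k : ℤ) : ℤ :=
  Matrix.det (Matrix.of fun i j : Fin (n - 1).toNat =>
    ichoose (m - max u ((k - 1) * ((j : ℤ) + 1))) (1 - ((i : ℤ) + 1) + ((j : ℤ) + 1)))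

open Finset Matrix HasAntidiagonal

section ichoose

variable {a b : ℤ}

lemma ichoose_natCast (a b : ℕ) : ichoose a b = a.choose b := by
  simp [ichoose]

lemma ichoose_of_neg (h : b < 0) : ichoose a b = 0 := if_neg (not_le.2 h)

@[simp] lemma ichoose_zero_right (a : ℤ) : ichoose a 0 = 1 := by simp [ichoose]

lemma ichoose_of_lt (h0 : 0 < b) (h : a < b) : ichoose a b = 0 := by
  rw [ichoose, if_pos h0.le, Nat.choose_eq_zero_of_lt (by omega), Nat.cast_zero]

lemma ichoose_pascal (ha : 1 ≤ a) :
    ichoose a b = ichoose (a - 1) b + ichoose (a - 1) (b - 1) := by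
  rcases lt_trichotomy b 0 with hb | rfl | hb
  · rw [ichoose_of_neg hb, ichoose_of_neg hb, ichoose_of_neg (by omega), add_zero]
  · rw [ichoose_of_neg (show (0 : ℤ) - 1 < 0 by omega)]; simp
  obtain ⟨a, rfl⟩ : ∃ a' : ℕ, a = (a' + 1 : ℕ) := ⟨(a - 1).toNat, by omega⟩
  obtain ⟨b, rfl⟩ : ∃ b' : ℕ, b = (b' + 1 : ℕ) := ⟨(b - 1).toNat, by omega⟩
  rw [Nat.cast_add_one, Nat.cast_add_one, add_sub_cancel_right, add_sub_cancel_right,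
    ← Nat.cast_add_one, ← Nat.cast_add_one, ichoose_natCast, ichoose_natCast, ichoose_natCast,
    Nat.choose_succ_succ', Nat.cast_add, add_comm]

lemma ichoose_absorption (ha : 0 ≤ a) : b * ichoose a b = a * ichoose (a - 1) (b - 1) := by
  rcases lt_trichotomy b 0 with hb | rfl | hb
  · rw [ichoose_of_neg hb, ichoose_of_neg (by omega), mul_zero, mul_zero]
  · rw [ichoose_of_neg (show (0 : ℤ) - 1 < 0 by omega)]; simp
  obtain ⟨b, rfl⟩ : ∃ b' : ℕ, b = (b' + 1 : ℕ) := ⟨(b - 1).toNat, by omega⟩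
  rcases ha.eq_or_lt with rfl | ha
  · rw [ichoose_of_lt hb hb, zero_mul, mul_zero]
  obtain ⟨a, rfl⟩ : ∃ a' : ℕ, a = (a' + 1 : ℕ) := ⟨(a - 1).toNat, by omega⟩
  rw [Nat.cast_add_one a, Nat.cast_add_one b, add_sub_cancel_right, add_sub_cancel_right,
    ← Nat.cast_add_one, ← Nat.cast_add_one, ichoose_natCast, ichoose_natCast]
  exact_mod_cast ((Nat.add_one_mul_choose_eq a b).trans (mul_comm _ _)).symm

theorem sum_antidiagonal_neg_one_pow_mul_ichoose (M : ℕ) {a b : ℤ} (hb : b ≤ 0) (s : ℕ)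
    (h : M ≤ a + s ∨ b + s < 0) :
    ∑ p ∈ antidiagonal s, (-1) ^ p.1 * ichoose M p.1 * ichoose (a + p.2) (b + p.2) =
      ichoose (a + s - M) (b + s) := by
  rcases h with h | h
  · induction M generalizing s with
    | zero =>
      rw [sum_eq_single_of_mem (0, s) (mem_antidiagonal.2 (zero_add s)) fun p hp hp0 => ?_]
      · simp
      · have := mem_antidiagonal.1 hp
        rw [ichoose_of_lt (a := (0 : ℕ)) (by grind) (by grind), mul_zero, zero_mul]
    | succ M ih =>
      have hshift : ∑ p ∈ antidiagonal s,
          (-1) ^ p.1 * ichoose M ((p.1 : ℤ) - 1) * ichoose (a + p.2) (b + p.2) =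
            -ichoose (a + s - 1 - M) (b + s - 1) := by
        cases s with
        | zero =>
          simp [ichoose_of_neg (show (-1 : ℤ) < 0 by omega),
            ichoose_of_neg (show b - 1 < 0 by omega)]
        | succ t =>
          rw [Nat.sum_antidiagonal_succ,
            show a + (t + 1 : ℕ) - 1 - M = a + t - M by push_cast; ring,
            show b + (t + 1 : ℕ) - 1 = b + t by push_cast; ring, ← ih t (by omega),
            ← sum_neg_distrib]
          simp [pow_succ, ichoose_of_neg (show (-1 : ℤ) < 0 by omega)]
      simp_rw [Nat.cast_succ, ichoose_pascal (show (1 : ℤ) ≤ M + 1 by omega),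
        add_sub_cancel_right, mul_add, add_mul, sum_add_distrib, hshift, ih s (by omega),
        ichoose_pascal (show 1 ≤ a + s - M by omega) (b := b + s)]
      ring_nf
  · rw [ichoose_of_neg h]
    refine sum_eq_zero fun p hp => ?_
    rw [ichoose_of_neg (a := a + p.2) (by have := mem_antidiagonal.1 hp; omega), mul_zero]

end ichoose

section ballot

variable {k a b : ℤ}

def ballot (k a b : ℤ) : ℤ := ichoose a b - k * ichoose (a - 1) (b - 1)

lemma ballot_of_neg (hb : b < 0) : ballot k a b = 0 := by
  rw [ballot, ichoose_of_neg hb, ichoose_of_neg (by omega), mul_zero, sub_zero]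

lemma mul_ballot (ha : 0 ≤ a) : a * ballot k a b = (a - k * b) * ichoose a b := by
  rw [ballot]
  linear_combination k * ichoose_absorption (b := b) ha

lemma ballot_mul_self (hk : 0 < k) {t : ℤ} (ht : 0 < t) : ballot k (k * t) t = 0 := by
  have := mul_ballot (k := k) (b := t) (by positivity : 0 ≤ k * t)
  rw [sub_self, zero_mul] at this
  exact (mul_eq_zero.1 this).resolve_left (by positivity)

theorem sum_antidiagonal_neg_one_pow_mul_ballot (M : ℕ) (hb : b ≤ 0) (s : ℕ)
    (h₁ : M ≤ a + s) (h₂ : M < a + s ∨ b + s ≤ 0) :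
    ∑ p ∈ antidiagonal s, (-1) ^ p.1 * ichoose M p.1 * ballot k (a + p.2) (b + p.2) =
      ballot k (a + s - M) (b + s) := by
  have h₀ := sum_antidiagonal_neg_one_pow_mul_ichoose M hb s (.inl h₁)
  have hpred := sum_antidiagonal_neg_one_pow_mul_ichoose M (a := a - 1) (b := b - 1) (by omega) s
    (by omega)
  rw [ballot, ← h₀, show a + s - M - 1 = a - 1 + s - M by ring,
    show b + s - 1 = b - 1 + s by ring, ← hpred, mul_sum, ← sum_sub_distrib]
  refine sum_congr rfl fun p _ => ?_
  rw [ballot, show a + p.2 - 1 = a - 1 + p.2 by ring, show b + p.2 - 1 = b - 1 + p.2 by ring]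
  ring

end ballot

section Hessenberg

variable {R : Type*} [CommRing R] (f : ℕ → ℕ → R)

lemma det_hessenberg_updateLast (h0 : ∀ i j, j + 1 < i → f i j = 0)
    (h1 : ∀ j, f (j + 1) j = 1) (v : ℕ → R) (t : ℕ) :
    (of fun i j : Fin (t + 1) => if (j : ℕ) < t then f i j else v i).det =
      ∑ p ∈ antidiagonal t, (-1) ^ p.1 * v p.2 * (of fun i j : Fin p.2 => f i j).det := by
  induction t with
  | zero => simp
  | succ t ih =>
    set A := of fun i j : Fin (t + 2) => if (j : ℕ) < t + 1 then f i j else v i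
    have hminor : A.submatrix (Fin.last _).succAbove (Fin.last t).castSucc.succAbove =
        of fun i j : Fin (t + 1) => if (j : ℕ) < t then f i j else v i := by
      ext i j
      by_cases hj : (j : ℕ) < t
      · simp [A, Fin.succAbove, Fin.lt_def, hj, hj.le]
      · simp [A, Fin.succAbove, Fin.lt_def, hj]
    have hprincipal : A.submatrix (Fin.last _).succAbove (Fin.last _).succAbove =
        of fun i j : Fin (t + 1) => f i j := by
      ext i j
      simp [A, Fin.succAbove_last, Nat.le_of_lt_succ j.isLt]
    rw [det_succ_row _ (Fin.last _), Fin.sum_univ_castSucc, Fin.sum_univ_castSucc,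
      sum_eq_zero fun j _ => ?_, hminor, hprincipal, ih, Nat.sum_antidiagonal_succ]
    · simp [A, h1, pow_succ, add_comm]
    · simp [A, h0 (t + 1) j (by omega)]

theorem det_hessenberg (h0 : ∀ i j, j + 1 < i → f i j = 0) (h1 : ∀ j, f (j + 1) j = 1)
    (s : ℕ) :
    (of fun i j : Fin (s + 1) => f i j).det =
      ∑ p ∈ antidiagonal s, (-1) ^ p.1 * f p.2 s * (of fun i j : Fin p.2 => f i j).det := by
  rw [← det_hessenberg_updateLast f h0 h1 (fun i => f i s)]
  congr with i j
  split_ifs with h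
  · rfl
  · rw [show (j : ℕ) = s by omega]

end Hessenberg

section weight

variable {u k : ℤ}

def weight (u k : ℤ) (i : ℕ) : ℤ := (-1) ^ i * ichoose (u - (k - 1) * i) i

def weightSum (u k : ℤ) (N : ℕ) : ℤ :=
  ∑ i ∈ range (N + 1), weight u k i * ichoose (u + N - k * i) (N - i)

lemma ichoose_sub_mul_self_eq_zero {i : ℕ} (hi : 0 < i) (h : u < k * i) :
    ichoose (u - (k - 1) * i) i = 0 :=
  ichoose_of_lt (by exact_mod_cast hi) (by linarith)

lemma weight_eq_zero {i : ℕ} (hi : 0 < i) (h : u < k * i) : weight u k i = 0 := by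
  rw [weight, ichoose_sub_mul_self_eq_zero hi h, mul_zero]

lemma sum_weight_mul_ichoose_pred (N : ℕ) :
    ∑ i ∈ range (N + 2),
        weight u k i * ichoose (u + (N + 1 : ℕ) - k * i - 1) ((N + 1 : ℕ) - i - 1) =
      weightSum u k N := by
  rw [sum_range_succ, ichoose_of_neg (by push_cast; omega), mul_zero, add_zero]
  refine sum_congr rfl fun i _ => ?_
  congr 2 <;> push_cast <;> ring

lemma sum_weight_mul_ballot (N : ℕ) :
    ∑ i ∈ range (N + 2),
        weight u k i * ballot k (u + (N + 1 : ℕ) - k * i) ((N + 1 : ℕ) - i) =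
      weightSum u k (N + 1) - k * weightSum u k N := by
  simp only [ballot, mul_sub, sum_sub_distrib, ← sum_weight_mul_ichoose_pred N, mul_sum]
  congr 1
  refine sum_congr rfl fun i _ => ?_
  ring

lemma sum_weight_mul_ballot_eq_zero (hk : 0 < k) (N : ℕ) (hu : u ≤ (k - 1) * (N + 1 : ℕ)) :
    ∑ i ∈ range (N + 2),
      weight u k i *
        ballot k ((k - 1) * (N + 1 : ℕ) + (N + 1 : ℕ) - k * i) ((N + 1 : ℕ) - i) = 0 := by
  rw [sum_range_succ, weight_eq_zero (Nat.succ_pos N) (by push_cast at hu ⊢; nlinarith), zero_mul,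
    add_zero]
  refine sum_eq_zero fun i hi => ?_
  have hi := mem_range.1 hi
  rw [show (k - 1) * (N + 1 : ℕ) + (N + 1 : ℕ) - k * i = k * ((N + 1 : ℕ) - i) by ring,
    ballot_mul_self hk (by omega), mul_zero]

lemma ichoose_mul_ichoose_pascal (hk : 0 < k) (hu : k ≤ u) {N I : ℤ} (hN : 0 < N) :
    ichoose (u - (k - 1) * I) I * ichoose (u + N - k * I) (N - I) =
      ichoose (u - (k - 1) * I) I * ichoose (u + N - k * I - 1) (N - I - 1) +
      ichoose (u - 1 - (k - 1) * I) I * ichoose (u - 1 + N - k * I) (N - I) +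
      ichoose (u - 1 - (k - 1) * I) (I - 1) * ichoose (u - 1 + N - k * I) (N - I) := by
  rcases le_or_gt (k * I) u with h | h
  · rw [ichoose_pascal (a := u - (k - 1) * I) (by nlinarith),
      ichoose_pascal (a := u + N - k * I) (by omega)]
    ring_nf
  · have hI : 1 < I := by nlinarith
    rw [ichoose_of_lt (a := u - (k - 1) * I) (by omega) (by linarith),
      ichoose_of_lt (a := u - 1 - (k - 1) * I) (b := I) (by omega) (by linarith),
      ichoose_of_lt (a := u - 1 - (k - 1) * I) (b := I - 1) (by omega) (by linarith)]
    ring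

lemma weightSum_succ (hk : 0 < k) (hu : k ≤ u) (N : ℕ) :
    weightSum u k (N + 1) =
      weightSum (u - 1) k (N + 1) + weightSum u k N - weightSum (u - k) k N := by
  have hshift : ∑ i ∈ range (N + 2), (-1) ^ i * ichoose (u - 1 - (k - 1) * i) ((i : ℤ) - 1) *
      ichoose (u - 1 + (N + 1 : ℕ) - k * i) ((N + 1 : ℕ) - i) = -weightSum (u - k) k N := by
    rw [sum_range_succ', ichoose_of_neg (a := u - 1 - (k - 1) * (0 : ℕ)) (by simp), mul_zero,
      zero_mul, add_zero, weightSum, ← sum_neg_distrib]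
    refine sum_congr rfl fun i _ => ?_
    rw [weight, pow_succ]
    push_cast
    ring_nf
  rw [weightSum, ← sum_weight_mul_ichoose_pred N, weightSum, sub_eq_add_neg, ← hshift,
    ← sum_add_distrib, ← sum_add_distrib]
  refine sum_congr rfl fun i _ => ?_
  simp only [weight, mul_assoc, ← mul_add]
  rw [ichoose_mul_ichoose_pascal hk hu (by positivity)]
  ring_nf

theorem weightSum_eq_pow (hk : 0 < k) (N : ℕ) (hu : (k - 1) * N ≤ u) :
    weightSum u k N = k ^ N := by
  induction N generalizing u with
  | zero => simp [weightSum, weight]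
  | succ N ih =>
    induction u, hu using Int.leInduction with
    | base =>
      have h := sum_weight_mul_ballot (u := (k - 1) * (N + 1 : ℕ)) (k := k) N
      rw [sum_weight_mul_ballot_eq_zero hk N le_rfl, ih (by push_cast; nlinarith)] at h
      linear_combination -h
    | succ u hu ihu =>
      rw [weightSum_succ hk (by push_cast at hu; nlinarith), add_sub_cancel_right, ihu,
        ih (by push_cast at hu; nlinarith), ih (by push_cast at hu ⊢; nlinarith)]
      ring

theorem sum_weight_mul_ballot_max_eq_zero (hk : 0 < k) (N : ℕ) :
    ∑ i ∈ range (N + 2),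
      weight u k i *
        ballot k (max u ((k - 1) * (N + 1 : ℕ)) + (N + 1 : ℕ) - k * i) ((N + 1 : ℕ) - i) =
        0 := by
  rcases le_total u ((k - 1) * (N + 1 : ℕ)) with h | h
  · rw [max_eq_right h, sum_weight_mul_ballot_eq_zero hk N h]
  · rw [max_eq_left h, sum_weight_mul_ballot, weightSum_eq_pow hk _ h,
      weightSum_eq_pow hk _ (by push_cast at h ⊢; nlinarith), pow_succ]
    ring

end weight

section determinant

variable {m u k : ℤ}

def entry (m u k : ℤ) (i j : ℕ) : ℤ :=
  ichoose (m - max u ((k - 1) * ((j : ℤ) + 1))) (1 - ((i : ℤ) + 1) + ((j : ℤ) + 1))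

def leadingMinor (m u k : ℤ) (s : ℕ) : ℤ := (of fun i j : Fin s => entry m u k i j).det

lemma D_eq_leadingMinor (m n u k : ℤ) : D m n u k = leadingMinor m u k (n - 1).toNat := rfl

lemma leadingMinor_succ (s : ℕ) :
    leadingMinor m u k (s + 1) = ∑ p ∈ antidiagonal s,
      (-1) ^ p.1 * ichoose (m - max u ((k - 1) * (s + 1 : ℕ))) (p.1 + 1 : ℕ) *
        leadingMinor m u k p.2 := by
  rw [leadingMinor, det_hessenberg (entry m u k) (fun i j h => ichoose_of_neg (by omega))
    (fun j => by simp [entry])]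
  refine sum_congr rfl fun p hp => ?_
  have := mem_antidiagonal.1 hp
  rw [entry]
  congr 3
  push_cast
  omega

def closedForm (m u k : ℤ) (s : ℕ) : ℤ :=
  ∑ i ∈ range (s + 1), weight u k i * ballot k (m + s - k * i) (s - i)

lemma closedForm_eq_sum_range {s L : ℕ} (hL : s < L) :
    closedForm m u k s = ∑ i ∈ range L, weight u k i * ballot k (m + s - k * i) (s - i) := by
  refine sum_subset (range_subset_range.2 hL) fun i _ hi => ?_
  rw [ballot_of_neg (by simp at hi; omega), mul_zero]

lemma closedForm_succ (hk : 0 < k) (hum : u ≤ m) (s : ℕ) (hs : (k - 1) * (s + 1 : ℕ) ≤ m) :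
    closedForm m u k (s + 1) = ∑ p ∈ antidiagonal s,
      (-1) ^ p.1 * ichoose (m - max u ((k - 1) * (s + 1 : ℕ))) (p.1 + 1 : ℕ) *
        closedForm m u k p.2 := by
  set c := max u ((k - 1) * (s + 1 : ℕ))
  obtain ⟨M, hM⟩ : ∃ M : ℕ, m - c = M := ⟨(m - c).toNat, by omega⟩
  have hc : (k - 1) * (s + 1 : ℕ) ≤ c := le_max_right _ _
  have hvanish : ∑ p ∈ antidiagonal (s + 1),
      (-1) ^ p.1 * ichoose M p.1 * closedForm m u k p.2 = 0 := by
    calc _ = ∑ i ∈ range (s + 2), weight u k i * ∑ p ∈ antidiagonal (s + 1),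
          (-1) ^ p.1 * ichoose M p.1 * ballot k (m - k * i + p.2) (-i + p.2) := by
          simp_rw [mul_sum]
          rw [sum_comm]
          refine sum_congr rfl fun p hp => ?_
          have hp : p.2 < s + 2 := by have := mem_antidiagonal.1 hp; omega
          rw [closedForm_eq_sum_range hp, mul_sum]
          refine sum_congr rfl fun i _ => ?_
          ring_nf
      _ = ∑ i ∈ range (s + 2),
          weight u k i * ballot k (c + (s + 1 : ℕ) - k * i) ((s + 1 : ℕ) - i) := by
          refine sum_congr rfl fun i hi => ?_
          have hi : i ≤ s + 1 := Nat.lt_succ_iff.1 (mem_range.1 hi)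
          have hki : k * i ≤ k * (s + 1 : ℕ) := by gcongr
          push_cast at hc hki
          rw [sum_antidiagonal_neg_one_pow_mul_ballot M (by omega) (s + 1) (by push_cast; linarith)]
          · congr 2 <;> push_cast <;> omega
          · rcases hi.lt_or_eq with hi | rfl
            · have hki : k * i ≤ k * s := by gcongr; omega
              left; push_cast; linarith
            · right; push_cast; omega
      _ = 0 := sum_weight_mul_ballot_max_eq_zero hk s
  simp only [Nat.sum_antidiagonal_succ, pow_zero, Nat.cast_zero, ichoose_zero_right, one_mul,
    pow_succ, mul_neg_one, neg_mul, sum_neg_distrib] at hvanish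
  rw [hM]
  linear_combination hvanish

theorem leadingMinor_eq_closedForm (hk : 0 < k) (hum : u ≤ m) (s : ℕ) (hs : (k - 1) * s ≤ m) :
    leadingMinor m u k s = closedForm m u k s := by
  induction s using Nat.strong_induction_on with
  | _ s ih =>
    cases s with
    | zero => simp [leadingMinor, closedForm, weight, ballot, ichoose_of_neg]
    | succ s =>
      rw [leadingMinor_succ, closedForm_succ hk hum s hs]
      refine sum_congr rfl fun p hp => ?_
      have hp : p.2 ≤ s := by have := mem_antidiagonal.1 hp; omega
      have : (k - 1) * p.2 ≤ (k - 1) * (s + 1 : ℕ) := by gcongr <;> omega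
      rw [ih p.2 (by omega) (this.trans hs)]

lemma cast_ballot {a : ℤ} (ha : 0 < a) (b : ℤ) :
    (ballot k a b : ℚ) = (a - k * b) / a * ichoose a b := by
  rw [div_mul_eq_mul_div, eq_div_iff (by positivity), mul_comm]
  exact_mod_cast mul_ballot ha.le

lemma cast_weight_mul_ballot (hu : 0 ≤ u) (hum : u < m) (N i : ℕ) :
    ((weight u k i * ballot k (m + N - k * i) (N - i) : ℤ) : ℚ) =
      (-1 : ℚ) ^ i * ((m : ℚ) - ((k : ℚ) - 1) * N) / ((m : ℚ) + N - k * i) *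
        (ichoose (m + N - k * i) (N - i) : ℚ) * (ichoose (u - (k - 1) * i) i : ℚ) := by
  rcases le_or_gt (k * i) u with h | h
  · rw [Int.cast_mul, cast_ballot (by omega), weight]
    push_cast
    ring
  · have hi : 0 < i := Nat.pos_of_ne_zero (by rintro rfl; simp at h; omega)
    simp [weight_eq_zero hi h, ichoose_sub_mul_self_eq_zero hi h]

theorem cast_closedForm (hu : 0 ≤ u) (hum : u < m) (N L : ℕ)
    (hL : ∀ i : ℕ, L < i → u < k * i) :
    (closedForm m u k N : ℚ) = ∑ i ∈ range (L + 1),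
      (-1 : ℚ) ^ i * ((m : ℚ) - ((k : ℚ) - 1) * N) / ((m : ℚ) + N - k * i) *
        (ichoose (m + N - k * i) (N - i) : ℚ) * (ichoose (u - (k - 1) * i) i : ℚ) := by
  rw [closedForm, Int.cast_sum, sum_congr rfl fun i _ => cast_weight_mul_ballot hu hum N i,
    ← eventually_constant_sum (N := N + 1) (n := N + L + 2) ?_ (by omega),
    eventually_constant_sum (N := L + 1) ?_ (by omega)]
  · intro i hi
    simp [ichoose_sub_mul_self_eq_zero (by omega) (hL i (by omega))]
  · intro i hi
    simp [ichoose_of_neg (show (N : ℤ) - i < 0 by omega)]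

end determinant

lemma lt_mul_of_toNat_floor_div_lt {u k : ℤ} (hk : 0 < k) {i : ℕ}
    (hi : (⌊(u : ℚ) / k⌋).toNat < i) : u < k * i := by
  have h : ⌊(u : ℚ) / k⌋ < (i : ℤ) := by omega
  rw [Int.floor_lt, Int.cast_natCast, div_lt_iff₀ (by positivity)] at h
  exact_mod_cast (show (u : ℚ) < k * i by linarith)

theorem det_eq_sum (m n u k : ℤ) (hu : 0 ≤ u) (hk : 2 ≤ k) (hn : 2 ≤ n)
    (hm : max (u + 1) ((k - 1) * (n - 1)) ≤ m) :
    (D m n u k : ℚ) =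
      ∑ i ∈ Finset.range ((⌊(u : ℚ) / (k : ℚ)⌋).toNat + 1),
        (-1 : ℚ) ^ i * ((m : ℚ) - ((k : ℚ) - 1) * ((n : ℚ) - 1)) /
            ((m : ℚ) + (n : ℚ) - 1 - (k : ℚ) * (i : ℚ)) *
          (ichoose (m + n - 1 - k * (i : ℤ)) (n - 1 - (i : ℤ)) : ℚ) *
          (ichoose (u - (k - 1) * (i : ℤ)) (i : ℤ) : ℚ) := by
  obtain ⟨N, rfl⟩ : ∃ N : ℕ, n = N + 1 := ⟨(n - 1).toNat, by omega⟩
  rw [D_eq_leadingMinor, show ((N : ℤ) + 1 - 1).toNat = N by simp,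
    leadingMinor_eq_closedForm (by omega) (by omega) N (by simpa using le_of_max_le_right hm),
    cast_closedForm hu (by omega) N _ fun i => lt_mul_of_toNat_floor_div_lt (by omega)]
  refine sum_congr rfl fun i _ => ?_
  push_cast
  ring_nf
end

section
/- For all integers m, n, u, k with u ≥ 0, k ≥ 2, n ≥ 2 and m ≥ max{u+1, (k-1)(n-1)}, the cardinality |L(u+1,1;m,n;k)| equals the sum over i from 0 to ⌊u/k⌋ of (-1)^i · (m-(k-1)(n-1))/(m+n-1-k·i) · C(m+n-1-k·i, n-1-i) · C(u-(k-1)·i, i), where the equality is of rational numbers; by convention |L(u+1,1;(k-1)(n-1),n;k)| = 0 when m = (k-1)(n-1). -/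
/-- `L(u+1,1;m,n;k)`: lattice paths from `(u+1,1)` to `(m,n)` with unit steps `(1,0)` and `(0,1)`
(encoded as the list of steps, `true` = `(1,0)`, `false` = `(0,1)`) such that every point `(x,y)`
on the path satisfies `(k-1)(y-1) ≤ x-1`. -/
def L (u k m n : ℤ) : Set (List Bool) :=
  { s | (u + 1) + (s.count true : ℤ) = m ∧ 1 + (s.count false : ℤ) = n ∧
        ∀ t, t <+: s →
          (k - 1) * ((1 + (t.count false : ℤ)) - 1) ≤ ((u + 1) + (t.count true : ℤ)) - 1 }

namespace LatticePaths

open Finset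

lemma ichoose_of_neg {a b : ℤ} (hb : b < 0) : ichoose a b = 0 := by
  simp [ichoose, not_le.2 hb]

lemma ichoose_zero_right (a : ℤ) : ichoose a 0 = 1 := by simp [ichoose]

lemma ichoose_eq_zero_of_lt {a b : ℤ} (hb : 0 < b) (h : a < b) : ichoose a b = 0 := by
  simp [ichoose, hb.le, Nat.choose_eq_zero_of_lt (show a.toNat < b.toNat by omega)]

-- The truncation `a.toNat` breaks Pascal's rule only at `a ≤ 0`, `b = 1`.
lemma ichoose_pascal {a b : ℤ} (h : 0 < a ∨ b ≠ 1) :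
    ichoose a b = ichoose (a - 1) b + ichoose (a - 1) (b - 1) := by
  rcases lt_trichotomy b 0 with hb | rfl | hb
  · simp [ichoose_of_neg, hb, show b - 1 < 0 by omega]
  · simp [ichoose_zero_right, ichoose_of_neg]
  obtain ⟨q, rfl⟩ : ∃ q : ℕ, b = q + 1 := ⟨(b - 1).toNat, by omega⟩
  rcases le_or_gt a 0 with ha | ha
  · have hq : q ≠ 0 := by omega
    simp [ichoose, Int.toNat_of_nonpos ha, Int.toNat_of_nonpos (show a - 1 ≤ 0 by omega),
      Nat.choose_eq_zero_of_lt, Nat.pos_of_ne_zero hq]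
  obtain ⟨p, rfl⟩ : ∃ p : ℕ, a = p + 1 := ⟨(a - 1).toNat, by omega⟩
  simp only [ichoose, show (0 : ℤ) ≤ q + 1 by omega, ↓reduceIte, Int.toNat_natCast_add_one,
    Nat.choose_succ_succ', Nat.cast_add, add_sub_cancel_right, Int.toNat_natCast, Nat.cast_nonneg]
  ring

lemma mul_ichoose_eq {a : ℤ} (ha : 0 < a) (b : ℤ) :
    b * ichoose a b = a * ichoose (a - 1) (b - 1) := by
  rcases lt_trichotomy b 0 with hb | rfl | hb
  · simp [ichoose_of_neg hb, ichoose_of_neg (show b - 1 < 0 by omega)]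
  · simp [ichoose_of_neg]
  obtain ⟨q, rfl⟩ : ∃ q : ℕ, b = q + 1 := ⟨(b - 1).toNat, by omega⟩
  obtain ⟨p, rfl⟩ : ∃ p : ℕ, a = p + 1 := ⟨(a - 1).toNat, by omega⟩
  have := Nat.add_one_mul_choose_eq p q
  simp only [ichoose, show (0 : ℤ) ≤ q + 1 by omega, ↓reduceIte, Int.toNat_natCast_add_one,
    add_sub_cancel_right, Nat.cast_nonneg, Int.toNat_natCast]
  exact_mod_cast (by linarith : _)

-- For `u = 0` the theorem says that `ballot k c a` counts `L 0 k (c + (k - 1) * a) (a + 1)`.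
def ballot (k c a : ℤ) : ℚ := c / (c + k * a) * ichoose (c + k * a) a

lemma ballot_zero_left (k a : ℤ) : ballot k 0 a = 0 := by simp [ballot]

lemma ballot_of_neg (k c : ℤ) {a : ℤ} (ha : a < 0) : ballot k c a = 0 := by
  simp [ballot, ichoose_of_neg ha]

lemma ballot_zero_right (k : ℤ) {c : ℤ} (hc : c ≠ 0) : ballot k c 0 = 1 := by
  simp [ballot, ichoose_zero_right, hc]

lemma ballot_eq_sub {k c a : ℤ} (h : 0 < c + k * a) :
    ballot k c a = ichoose (c + k * a) a - k * ichoose (c + k * a - 1) (a - 1) := by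
  have hN : ((c + k * a : ℤ) : ℚ) ≠ 0 := by exact_mod_cast h.ne'
  have key : (a : ℚ) * ichoose (c + k * a) a =
      (c + k * a : ℤ) * ichoose (c + k * a - 1) (a - 1) := by
    exact_mod_cast mul_ichoose_eq h a
  push_cast at hN key
  rw [ballot, div_mul_eq_mul_div, div_eq_iff hN]
  linear_combination -(k : ℚ) * key

lemma ballot_pascal {k c a : ℤ} (h : 0 < c + k * a - 1) :
    ballot k c a = ballot k (c - 1) a + ballot k (c + k - 1) (a - 1) := by
  rcases lt_or_ge a 0 with ha | ha
  · simp [ballot_of_neg, ha, show a - 1 < 0 by omega]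
  have e₁ : c - 1 + k * a = c + k * a - 1 := by ring
  have e₂ : c + k - 1 + k * (a - 1) = c + k * a - 1 := by ring
  rw [ballot_eq_sub (by omega), ballot_eq_sub (by omega), ballot_eq_sub (by omega), e₁, e₂,
    ichoose_pascal (a := c + k * a) (Or.inl (by omega)),
    ichoose_pascal (a := c + k * a - 1) (b := a - 1) (Or.inl h)]
  push_cast
  ring

def ballotSumTerm (u k m n : ℤ) (i : ℕ) : ℚ :=
  (-1) ^ i * ballot k (m - (k - 1) * (n - 1)) (n - 1 - i) * ichoose (u - (k - 1) * i) i

-- The terms with `u < k * i` vanish, so any range of length `> u / k` gives the same sum.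
def ballotSum (u k m n : ℤ) : ℚ := ∑ i ∈ range (u.toNat + 1), ballotSumTerm u k m n i

lemma ballotSumTerm_eq_zero {u k : ℤ} (m n : ℤ) {i : ℕ} (hu : 0 ≤ u) (hi : u < k * i) :
    ballotSumTerm u k m n i = 0 := by
  have hi₀ : (0 : ℤ) < i := by
    rcases Nat.eq_zero_or_pos i with rfl | h
    · rw [Nat.cast_zero, mul_zero] at hi; omega
    · exact_mod_cast h
  simp [ballotSumTerm, ichoose_eq_zero_of_lt hi₀ (by linarith : u - (k - 1) * i < i)]

lemma ballotSum_eq_sum_range {u k : ℤ} (m n : ℤ) (hu : 0 ≤ u) (hk : 0 < k) {N : ℕ}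
    (hN : u < k * N) : ballotSum u k m n = ∑ i ∈ range N, ballotSumTerm u k m n i := by
  have vanish : ∀ M : ℕ, u < k * M → ∀ i ≥ M, ballotSumTerm u k m n i = 0 :=
    fun M hM i hi => ballotSumTerm_eq_zero m n hu (hM.trans_le (by gcongr))
  have hu' : u < k * (u.toNat + 1 : ℕ) := by push_cast; nlinarith [Int.self_le_toNat u]
  have hmin : u < k * (min N (u.toNat + 1) : ℕ) := by
    rcases min_choice N (u.toNat + 1) with h | h <;> rw [h] <;> assumption
  rw [ballotSum, eventually_constant_sum (vanish _ hmin) (min_le_right _ _),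
    eventually_constant_sum (vanish _ hmin) (min_le_left _ _)]

lemma ballotSum_eq_zero_of_eq {u k m n : ℤ} (h : (k - 1) * (n - 1) = m) :
    ballotSum u k m n = 0 :=
  sum_eq_zero fun i _ => by simp [ballotSumTerm, ← h, ballot_zero_left]

lemma ballotSum_one {u k m : ℤ} (hm : m ≠ 0) : ballotSum u k m 1 = 1 := by
  have hpos : ∀ i : ℕ, ballotSumTerm u k m 1 (i + 1) = 0 := fun i => by
    rw [ballotSumTerm, ballot_of_neg _ _ (by omega)]; simp
  rw [ballotSum, sum_range_succ', sum_eq_zero fun i _ => hpos i]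
  simp [ballotSumTerm, ballot_zero_right k hm, ichoose_zero_right]

lemma ballotSum_last_step {u k m n : ℤ} (hu : 0 ≤ u) (hm : u < m) (hn : 2 ≤ n) :
    ballotSum u k m n = ballotSum u k (m - 1) n + ballotSum u k m (n - 1) := by
  rw [ballotSum, ballotSum, ballotSum, ← sum_add_distrib]
  refine sum_congr rfl fun i _ => ?_
  rcases lt_or_ge u (k * i) with hi | hi
  · simp only [ballotSumTerm_eq_zero _ _ hu hi, add_zero]
  have e₁ : m - 1 - (k - 1) * (n - 1) = m - (k - 1) * (n - 1) - 1 := by ring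
  have e₂ : m - (k - 1) * (n - 1 - 1) = m - (k - 1) * (n - 1) + k - 1 := by ring
  have e₃ : n - 1 - 1 - (i : ℤ) = n - 1 - i - 1 := by ring
  simp only [ballotSumTerm, e₁, e₂, e₃]
  rw [ballot_pascal (by linarith)]
  ring

lemma ballotSum_first_step {u k : ℤ} (m n : ℤ) (hk : 0 < k) (hku : k - 1 ≤ u) :
    ballotSum u k m n =
      ballotSum (u + 1) k m n + ballotSum (u - (k - 1)) k (m - (k - 1)) (n - 1) := by
  have hu : 0 ≤ u := by omega
  set N := u.toNat + 1 with hN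
  have h₀ : ballotSum u k m n = ∑ i ∈ range (N + 1), ballotSumTerm u k m n i :=
    ballotSum_eq_sum_range m n hu hk (by push_cast; nlinarith [Int.self_le_toNat u])
  have h₁ : ballotSum (u + 1) k m n = ∑ i ∈ range (N + 1), ballotSumTerm (u + 1) k m n i := by
    rw [ballotSum, show (u + 1).toNat = N by omega]
  have h₂ : ballotSum (u - (k - 1)) k (m - (k - 1)) (n - 1) =
      ∑ i ∈ range N, ballotSumTerm (u - (k - 1)) k (m - (k - 1)) (n - 1) i :=
    ballotSum_eq_sum_range _ _ (by omega) hk (by nlinarith [Int.self_le_toNat u])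
  have step : ∀ j : ℕ, ballotSumTerm (u + 1) k m n (j + 1) = ballotSumTerm u k m n (j + 1) -
      ballotSumTerm (u - (k - 1)) k (m - (k - 1)) (n - 1) j := by
    intro j
    have pascal := ichoose_pascal (a := u + 1 - (k - 1) * (j + 1)) (b := j + 1)
      (by rcases j with _ | j <;> [left; right] <;> omega)
    rw [show u + 1 - (k - 1) * (j + 1) - 1 = u - (k - 1) * (j + 1) by ring,
      show (j : ℤ) + 1 - 1 = j by ring] at pascal
    have e₁ : m - (k - 1) - (k - 1) * (n - 1 - 1) = m - (k - 1) * (n - 1) := by ring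
    have e₂ : n - 1 - 1 - (j : ℤ) = n - 1 - (j + 1) := by ring
    have e₃ : u - (k - 1) - (k - 1) * j = u - (k - 1) * (j + 1) := by ring
    simp only [ballotSumTerm, Nat.cast_add, Nat.cast_one, e₁, e₂, e₃, pascal]
    push_cast
    ring
  have step₀ : ballotSumTerm (u + 1) k m n 0 = ballotSumTerm u k m n 0 := by
    simp [ballotSumTerm, ichoose_zero_right]
  rw [h₀, h₁, h₂, sum_range_succ', sum_range_succ' (fun i => ballotSumTerm (u + 1) k m n i)]
  simp only [step, step₀, sum_sub_distrib]
  ring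

lemma ncard_eq_ncard_preimage_add_ncard_preimage {α β : Type*} {S : Set β} {f g : α → β}
    (hf : f.Injective) (hg : g.Injective) (hfg : ∀ a b, f a ≠ g b)
    (hS : S ⊆ Set.range f ∪ Set.range g) (hfin : S.Finite) :
    S.ncard = (f ⁻¹' S).ncard + (g ⁻¹' S).ncard := by
  have hdisj : Disjoint (S ∩ Set.range f) (S ∩ Set.range g) := by
    rw [Set.disjoint_left]
    rintro _ ⟨-, a, rfl⟩ ⟨-, b, hb⟩
    exact hfg a b hb.symm
  rw [← Set.preimage_inter_range, ← Set.preimage_inter_range (f := g),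
    Set.ncard_preimage_of_injective_subset_range hf Set.inter_subset_right,
    Set.ncard_preimage_of_injective_subset_range hg Set.inter_subset_right,
    ← Set.ncard_union_eq hdisj (hfin.subset Set.inter_subset_left)
      (hfin.subset Set.inter_subset_left), ← Set.inter_union_distrib_left,
    Set.inter_eq_left.2 hS]

lemma mem_L_iff {u k m n : ℤ} {s : List Bool} :
    s ∈ L u k m n ↔ u + 1 + (s.count true : ℤ) = m ∧ 1 + (s.count false : ℤ) = n ∧
      ∀ t, t <+: s → (k - 1) * (t.count false : ℤ) ≤ u + t.count true := by
  simp only [L, Set.mem_ofPred_eq, add_sub_cancel_left]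
  exact and_congr_right' <| and_congr_right' <| forall₂_congr fun _ _ => by
    rw [add_sub_right_comm, add_sub_cancel_right]

lemma L_finite (u k m n : ℤ) : (L u k m n).Finite := by
  refine (List.finite_length_le Bool (m + n - u).toNat).subset fun s hs => ?_
  have := List.count_true_add_count_false s
  rw [mem_L_iff] at hs
  simp only [Set.mem_ofPred_eq]
  omega

lemma nil_notMem_L {u k m n : ℤ} (hn : n ≠ 1) : [] ∉ L u k m n := by
  simp [mem_L_iff, Ne.symm hn]

lemma L_eq_empty_of_lt {u k m n : ℤ} (h : m - 1 < (k - 1) * (n - 1)) : L u k m n = ∅ := by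
  refine Set.eq_empty_of_forall_notMem fun s hs => ?_
  obtain ⟨h₁, h₂, h₃⟩ := mem_L_iff.1 hs
  have := h₃ s (List.prefix_refl s)
  rw [show (s.count false : ℤ) = n - 1 by omega] at this
  omega

lemma L_one {u k m : ℤ} (hu : 0 ≤ u) (hm : u < m) :
    L u k m 1 = {List.replicate (m - u - 1).toNat true} := by
  ext s
  rw [mem_L_iff, Set.mem_singleton_iff]
  constructor
  · rintro ⟨h₁, h₂, -⟩
    have hs : ∀ b ∈ s, b = true := fun b hb => by
      cases b
      · exact absurd (List.count_pos_iff.2 hb) (by omega)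
      · rfl
    rw [List.eq_replicate_iff]
    have := List.count_true_add_count_false s
    exact ⟨by omega, hs⟩
  · rintro rfl
    refine ⟨by rw [List.count_replicate_self]; omega, by
      simp only [List.count_replicate, beq_false, Bool.not_true, Bool.false_eq_true, ↓reduceIte,
        Nat.cast_zero, add_zero], fun t ht => ?_⟩
    rw [(List.prefix_replicate_iff.1 ht).2]
    simp only [List.count_replicate, beq_false, Bool.not_true, Bool.false_eq_true, ↓reduceIte,
      Nat.cast_zero, mul_zero]
    omega

lemma preimage_cons_true_L {u k m n : ℤ} (hu : 0 ≤ u) :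
    List.cons true ⁻¹' L u k m n = L (u + 1) k m n := by
  ext t
  simp only [Set.mem_preimage, mem_L_iff, List.prefix_cons_iff, forall_eq_or_imp,
    forall_exists_index, and_imp, forall_comm (α := List Bool), forall_eq, List.count_cons,
    List.count_nil, BEq.rfl, beq_false, Bool.not_true, Bool.false_eq_true, ↓reduceIte, add_zero,
    Nat.cast_add, Nat.cast_one, Nat.cast_zero, mul_zero]
  constructor
  · rintro ⟨h₁, h₂, -, h₃⟩
    exact ⟨by omega, h₂, fun r hr => by linarith [h₃ r hr]⟩
  · rintro ⟨h₁, h₂, h₃⟩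
    exact ⟨by omega, h₂, hu, fun r hr => by linarith [h₃ r hr]⟩

lemma preimage_cons_false_L {u k m n : ℤ} (hu : 0 ≤ u) :
    List.cons false ⁻¹' L u k m n = L (u - (k - 1)) k (m - (k - 1)) (n - 1) := by
  ext t
  simp only [Set.mem_preimage, mem_L_iff, List.prefix_cons_iff, forall_eq_or_imp,
    forall_exists_index, and_imp, forall_comm (α := List Bool), forall_eq, List.count_cons,
    List.count_nil, BEq.rfl, beq_true, Bool.false_eq_true, ↓reduceIte, add_zero, Nat.cast_add,
    Nat.cast_one, Nat.cast_zero, mul_zero]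
  constructor
  · rintro ⟨h₁, h₂, -, h₃⟩
    exact ⟨by omega, by omega, fun r hr => by linarith [h₃ r hr]⟩
  · rintro ⟨h₁, h₂, h₃⟩
    exact ⟨by omega, by omega, hu, fun r hr => by linarith [h₃ r hr]⟩

lemma preimage_concat_true_L {u k m n : ℤ} (h : (k - 1) * (n - 1) < m) :
    (· ++ [true]) ⁻¹' L u k m n = L u k (m - 1) n := by
  ext t
  simp only [Set.mem_preimage, mem_L_iff, List.prefix_concat_iff, or_imp, forall_and, forall_eq,
    List.count_append, List.count_singleton, BEq.rfl, beq_false, Bool.not_true, Bool.false_eq_true,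
    ↓reduceIte, add_zero, Nat.cast_add, Nat.cast_one]
  constructor
  · rintro ⟨h₁, h₂, -, h₃⟩
    exact ⟨by omega, h₂, h₃⟩
  · rintro ⟨h₁, h₂, h₃⟩
    refine ⟨by omega, h₂, ?_, h₃⟩
    rw [show (t.count false : ℤ) = n - 1 by omega]
    omega

lemma preimage_concat_false_L {u k m n : ℤ} (h : (k - 1) * (n - 1) < m) :
    (· ++ [false]) ⁻¹' L u k m n = L u k m (n - 1) := by
  ext t
  simp only [Set.mem_preimage, mem_L_iff, List.prefix_concat_iff, or_imp, forall_and, forall_eq,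
    List.count_append, List.count_singleton, BEq.rfl, beq_true, Bool.false_eq_true, ↓reduceIte,
    add_zero, Nat.cast_add, Nat.cast_one]
  constructor
  · rintro ⟨h₁, h₂, -, h₃⟩
    exact ⟨h₁, by omega, h₃⟩
  · rintro ⟨h₁, h₂, h₃⟩
    refine ⟨h₁, by omega, ?_, h₃⟩
    rw [show (t.count false : ℤ) + 1 = n - 1 by omega]
    omega

lemma ncard_L_first_step {u k m n : ℤ} (hu : 0 ≤ u) (hn : n ≠ 1) :
    (L u k m n).ncard =
      (L (u + 1) k m n).ncard + (L (u - (k - 1)) k (m - (k - 1)) (n - 1)).ncard := by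
  rw [ncard_eq_ncard_preimage_add_ncard_preimage (f := List.cons true) (g := List.cons false)
    List.cons_injective List.cons_injective
    (fun _ _ h => by simp at h) _ (L_finite u k m n),
    preimage_cons_true_L hu, preimage_cons_false_L hu]
  rintro (_ | ⟨_ | _, t⟩) hs
  · exact absurd hs (nil_notMem_L hn)
  · exact Or.inr ⟨t, rfl⟩
  · exact Or.inl ⟨t, rfl⟩

lemma ncard_L_last_step {u k m n : ℤ} (hn : n ≠ 1) (h : (k - 1) * (n - 1) < m) :
    (L u k m n).ncard = (L u k (m - 1) n).ncard + (L u k m (n - 1)).ncard := by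
  rw [ncard_eq_ncard_preimage_add_ncard_preimage (List.append_left_injective [true])
    (List.append_left_injective [false]) (fun _ _ h => by simpa using congrArg List.getLast? h) _
    (L_finite u k m n), preimage_concat_true_L h, preimage_concat_false_L h]
  intro s hs
  rcases s.eq_nil_or_concat' with rfl | ⟨t, _ | _, rfl⟩
  · exact absurd hs (nil_notMem_L hn)
  · exact Or.inr ⟨t, rfl⟩
  · exact Or.inl ⟨t, rfl⟩

lemma ncard_L_eq_ballotSum_succ {u k m n : ℤ} (hk : 0 < k) (hku : k - 1 ≤ u) (hn : n ≠ 1)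
    (h₁ : ((L u k m n).ncard : ℚ) = ballotSum u k m n)
    (h₂ : ((L (u - (k - 1)) k (m - (k - 1)) (n - 1)).ncard : ℚ) =
      ballotSum (u - (k - 1)) k (m - (k - 1)) (n - 1)) :
    ((L (u + 1) k m n).ncard : ℚ) = ballotSum (u + 1) k m n := by
  have card_step := ncard_L_first_step (k := k) (m := m) (by omega : 0 ≤ u) hn
  have sum_step := ballotSum_first_step m n hk hku
  rw [← Nat.cast_inj (R := ℚ), Nat.cast_add] at card_step
  linarith

theorem ncard_L_eq_ballotSum {u k m n : ℤ} (hk : 0 < k) (hu : 0 ≤ u) (hum : u < m)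
    (hn : 1 ≤ n) (hc : (k - 1) * (n - 1) ≤ m) :
    ((L u k m n).ncard : ℚ) = ballotSum u k m n := by
  have on_line : ∀ {u m n : ℤ}, (k - 1) * (n - 1) = m →
      ((L u k m n).ncard : ℚ) = ballotSum u k m n := fun h => by
    rw [L_eq_empty_of_lt (by omega), ballotSum_eq_zero_of_eq h, Set.ncard_empty, Nat.cast_zero]
  rcases eq_or_lt_of_le hn with rfl | hn
  · rw [L_one hu hum, Set.ncard_singleton, ballotSum_one (by omega), Nat.cast_one]
  rcases eq_or_lt_of_le hc with hc | hc
  · exact on_line hc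
  have e : (k - 1) * (n - 1 - 1) = (k - 1) * (n - 1) - (k - 1) := by ring
  have right := ncard_L_eq_ballotSum hk hu hum (n := n - 1) (by omega) (by nlinarith)
  have left : ((L u k (m - 1) n).ncard : ℚ) = ballotSum u k (m - 1) n := by
    rcases lt_or_eq_of_le (show u ≤ m - 1 by omega) with hlt | hdiag
    · exact ncard_L_eq_ballotSum hk hu hlt hn.le (by omega)
    rw [← hdiag]
    rcases eq_or_lt_of_le (show (k - 1) * (n - 1) ≤ u by omega) with h₀ | hpos
    · exact on_line h₀
    have hku : k ≤ u := by nlinarith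
    have := ncard_L_eq_ballotSum_succ (u := u - 1) (m := u) hk (by omega) (by omega)
      (ncard_L_eq_ballotSum hk (by omega) (by omega) hn.le (by omega))
      (ncard_L_eq_ballotSum hk (by omega) (by omega) (by omega) (by nlinarith))
    rwa [sub_add_cancel] at this
  rw [ncard_L_last_step (by omega) (by omega), ballotSum_last_step hu hum (by omega), Nat.cast_add,
    left, right]
termination_by (m + n).toNat
decreasing_by all_goals omega

end LatticePaths

theorem card_L_eq_sum (m n u k : ℤ) (hu : 0 ≤ u) (hk : 2 ≤ k) (hn : 2 ≤ n)
    (hm : max (u + 1) ((k - 1) * (n - 1)) ≤ m) :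
    ((L u k m n).ncard : ℚ) =
      ∑ i ∈ Finset.range ((⌊(u : ℚ) / (k : ℚ)⌋).toNat + 1),
        (-1 : ℚ) ^ i * ((m : ℚ) - ((k : ℚ) - 1) * ((n : ℚ) - 1)) /
            ((m : ℚ) + (n : ℚ) - 1 - (k : ℚ) * (i : ℚ)) *
          (ichoose (m + n - 1 - k * (i : ℤ)) (n - 1 - (i : ℤ)) : ℚ) *
          (ichoose (u - (k - 1) * (i : ℤ)) (i : ℤ) : ℚ) := by
  obtain ⟨hum, hc⟩ := max_le_iff.1 hm
  have hk₀ : 0 < k := by omega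
  have hfloor : u < k * ((⌊(u : ℚ) / k⌋).toNat + 1 : ℕ) := by
    have h₀ : 0 ≤ ⌊(u : ℚ) / k⌋ := Int.floor_nonneg.2 (by positivity)
    have h := Int.lt_floor_add_one ((u : ℚ) / k)
    rw [div_lt_iff₀ (by exact_mod_cast hk₀)] at h
    push_cast [Int.toNat_of_nonneg h₀]
    exact_mod_cast (by linarith : (u : ℚ) < k * (⌊(u : ℚ) / k⌋ + 1))
  rw [LatticePaths.ncard_L_eq_ballotSum hk₀ hu (by omega) (by omega) hc,
    LatticePaths.ballotSum_eq_sum_range m n hu hk₀ hfloor]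
  refine Finset.sum_congr rfl fun i _ => ?_
  rw [LatticePaths.ballotSumTerm, LatticePaths.ballot,
    show m - (k - 1) * (n - 1) + k * (n - 1 - i) = m + n - 1 - k * i by ring]
  push_cast
  ring
end

section
/- For all integers u, k, n with k ≥ 2, u ≥ k-1, and 2 ≤ n ≤ ⌊u/(k-1)⌋ + 1, the determinant D(u+1,n,u,k) equals 1. -/
/-!
With `m = u + 1` and `(n - 1)(k - 1) ≤ u` (which is what `n ≤ ⌊u/(k-1)⌋ + 1` says), every
`max{u, (k-1)j}` equals `u`, so the `(i, j)` entry is `C(1, j - i + 1)`: the matrix is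
lower bidiagonal with ones on the diagonal, and its determinant is `1`.
-/

theorem ichoose_eq_zero_of_lt {a b : ℤ} (ha : 0 ≤ a) (hab : a < b) : ichoose a b = 0 := by
  rw [ichoose, if_pos (by omega), Nat.choose_eq_zero_of_lt (by omega), Nat.cast_zero]

theorem ichoose_self {a : ℤ} (ha : 0 ≤ a) : ichoose a a = 1 := by
  simp [ichoose, ha]

theorem det_of_ichoose_one_sub_add_one (m : ℕ) :
    (Matrix.of fun i j : Fin m => ichoose 1 ((j : ℤ) - i + 1)).det = 1 := by
  rw [Matrix.det_of_isLowerTriangular]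
  · simp [ichoose_self]
  · intro i j hij
    have hij : (i : ℤ) < j := by exact_mod_cast hij
    exact ichoose_eq_zero_of_lt zero_le_one (by omega)

theorem sub_one_mul_le_of_le_floor_div_add_one {K : Type*} [Field K] [LinearOrder K]
    [IsStrictOrderedRing K] [FloorRing K] {n u c : ℤ} (hc : 0 < c)
    (h : n ≤ ⌊(u : K) / c⌋ + 1) : (n - 1) * c ≤ u := by
  have h : ((n - 1 : ℤ) : K) ≤ u / c := Int.le_floor.mp (by omega)
  exact_mod_cast (le_div_iff₀ (by exact_mod_cast hc)).mp h

theorem det_base_m_eq_u_add_one_general (u k n : ℤ) (hk : 2 ≤ k)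
    (hn' : n ≤ ⌊(u : ℚ) / ((k : ℚ) - 1)⌋ + 1) :
    D (u + 1) n u k = 1 := by
  have hnk : (n - 1) * (k - 1) ≤ u :=
    sub_one_mul_le_of_le_floor_div_add_one (K := ℚ) (by omega) (by exact_mod_cast hn')
  have hmax (j : Fin (n - 1).toNat) : max u ((k - 1) * ((j : ℤ) + 1)) = u := by
    have hj : (j : ℤ) + 1 ≤ n - 1 := by have := j.isLt; omega
    exact max_eq_left (le_trans (by nlinarith) hnk)
  refine (congrArg Matrix.det ?_).trans (det_of_ichoose_one_sub_add_one (n - 1).toNat)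
  ext i j
  rw [Matrix.of_apply, Matrix.of_apply, hmax]
  ring_nf

theorem det_base_m_eq_u_add_one (u k n : ℤ) (hk : 2 ≤ k) (hu : k - 1 ≤ u)
    (hn : 2 ≤ n) (hn' : n ≤ ⌊(u : ℚ) / ((k : ℚ) - 1)⌋ + 1) :
    D (u + 1) n u k = 1 :=
  det_base_m_eq_u_add_one_general u k n hk hn'
end

section
/- For all integers u ≥ 0, k ≥ 2, and n ≥ max{2, ⌈u/(k-1)⌉ + 1}, the determinant D((k-1)(n-1), n, u, k) equals 0. -/
theorem D_eq_zero_of_eq_max {m n u k : ℤ} (hn : 2 ≤ n) (hm : m = max u ((k - 1) * (n - 1))) :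
    D m n u k = 0 := by
  apply Matrix.det_eq_zero_of_column_eq_zero ⟨(n - 1).toNat - 1, by omega⟩
  intro i
  have hlast : ((((n - 1).toNat - 1 : ℕ)) : ℤ) + 1 = n - 1 := by omega
  have hi : (i : ℤ) < (n - 1).toNat := by exact_mod_cast i.isLt
  rw [Matrix.of_apply, hlast, ← hm, sub_self]
  exact ichoose_eq_zero_of_lt le_rfl (by omega)

theorem le_mul_of_ceil_div_le {u c m : ℤ} (hc : 0 < c) (h : ⌈(u : ℚ) / c⌉ ≤ m) : u ≤ c * m := by
  rw [Int.ceil_le, div_le_iff₀ (by exact_mod_cast hc)] at h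
  exact_mod_cast h.trans_eq (mul_comm _ _)

theorem det_base_boundary_general (u k n : ℤ) (hk : 2 ≤ k)
    (hn : max 2 (⌈(u : ℚ) / ((k : ℚ) - 1)⌉ + 1) ≤ n) :
    D ((k - 1) * (n - 1)) n u k = 0 := by
  obtain ⟨hn2, hceil⟩ := max_le_iff.mp hn
  have hu : u ≤ (k - 1) * (n - 1) :=
    le_mul_of_ceil_div_le (by omega) (by push_cast; omega)
  exact D_eq_zero_of_eq_max hn2 (max_eq_right hu).symm

theorem det_base_boundary (u k n : ℤ) (hu : 0 ≤ u) (hk : 2 ≤ k)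
    (hn : max 2 (⌈(u : ℚ) / ((k : ℚ) - 1)⌉ + 1) ≤ n) :
    D ((k - 1) * (n - 1)) n u k = 0 :=
  det_base_boundary_general u k n hk hn
end
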